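/- arXiv:math/0406295 — 2 statements merged into one kernel-verified Lean document; each statement's English description precedes it below -/
import Mathlib

section
/- Let R be an sQQR-domain which is not integrally closed and let x be in the integral closure of R but not in R. Then the set of prime ideals of R not containing the conductor (R :_R x) is infinite; in particular R has infinitely many prime ideals. -/
noncomputable section

/-- The image of `A` in `L` under the algebra map, as a set. -/
def imageR (A L : Type*) [CommRing A] [CommRing L] [Algebra A L] : Set L :=
  Set.range (algebraMap A L)

/-- The Kaplansky transform of an ideal `I` of `A`, computed inside `L`. -/
def omegaSet (A L : Type*) [CommRing A] [CommRing L] [Algebra A L] (I : Ideal A) : Set L :=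
  {x : L | ∀ a ∈ I, ∃ n : ℕ, 1 ≤ n ∧ ∃ r : A, (algebraMap A L a) ^ n * x = algebraMap A L r}

/-- The localization of `A` at the prime `P`, viewed as a subset of `L`. -/
def locSet (A L : Type*) [CommRing A] [CommRing L] [Algebra A L] (P : Ideal A) : Set L :=
  {x : L | ∃ s : A, s ∉ P ∧ ∃ r : A, x * algebraMap A L s = algebraMap A L r}

/-- The conductor ideal `(A :_A U) = {r : A | r • U ⊆ A}`. -/
def condIdeal (A L : Type*) [CommRing A] [CommRing L] [Algebra A L] (U : Set L) : Ideal A where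
  carrier := {r : A | ∀ u ∈ U, ∃ r' : A, algebraMap A L r * u = algebraMap A L r'}
  zero_mem' := fun u _ => ⟨0, by simp⟩
  add_mem' := by
    rintro a b ha hb u hu
    obtain ⟨a', ha'⟩ := ha u hu
    obtain ⟨b', hb'⟩ := hb u hu
    exact ⟨a' + b', by rw [map_add, map_add, add_mul, ha', hb']⟩
  smul_mem' := by
    rintro c r h u hu
    obtain ⟨r', hr'⟩ := h u hu
    exact ⟨c * r', by rw [smul_eq_mul, map_mul, map_mul, mul_assoc, hr']⟩

/-- A domain is an sQQR-domain if every simple overring `R[u]`, `u` in the quotient field,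
is an intersection of localizations of `R` at primes. -/
def IsSQQR (A : Type*) [CommRing A] [IsDomain A] : Prop :=
  ∀ u : FractionRing A, ∃ Ps : Set (Ideal A), (∀ P ∈ Ps, P.IsPrime) ∧
    (↑(Algebra.adjoin A {u} : Subalgebra A (FractionRing A)) : Set (FractionRing A)) =
      ⋂ P ∈ Ps, locSet A (FractionRing A) P

/-- A Prüfer domain: every localization at a prime is a valuation domain. -/
def IsPrufer (A : Type*) [CommRing A] [IsDomain A] : Prop :=
  ∀ (P : Ideal A) (hP : P.IsPrime),
    haveI := hP
    letI : IsDomain (Localization.AtPrime P) := IsLocalization.isDomain_of_local_atPrime hP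
    ValuationRing (Localization.AtPrime P)


open Polynomial in
lemma aux_inv_integral {A F : Type*} [CommRing A] [Field F] [Nontrivial A] [Algebra A F]
    {t : A} {y : F} (hy : IsIntegral A y) (hyt : y * algebraMap A F t = 1) :
    ∃ u : A, y = algebraMap A F u := by
  obtain ⟨p, pm, hp⟩ := hy
  rw [← Polynomial.aeval_def] at hp
  set n := p.natDegree with hdeg
  have hn1 : 1 ≤ n := by
    by_contra h
    push_neg at h
    have hn0 : n = 0 := by omega
    have : p = 1 := pm.natDegree_eq_zero.mp hn0
    rw [this, map_one] at hp
    exact one_ne_zero hp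
  set T := algebraMap A F t with hT
  have hTpow : ∀ i : ℕ, y ^ i * T ^ i = 1 := fun i => by rw [← mul_pow, hyt, one_pow]
  have h0 : (0 : F) = ∑ i ∈ Finset.range (n + 1), p.coeff i • y ^ i := by
    rw [← Polynomial.aeval_eq_sum_range, hp]
  have h1 : (0 : F) = (∑ i ∈ Finset.range n, p.coeff i • y ^ i) * T ^ (n - 1)
      + (p.coeff n • y ^ n) * T ^ (n - 1) := by
    rw [← add_mul, ← Finset.sum_range_succ, ← h0, zero_mul]
  have hlast : (p.coeff n • y ^ n) * T ^ (n - 1) = y := by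
    rw [pm.coeff_natDegree, one_smul]
    conv_lhs => rw [show n = (n - 1) + 1 by omega]
    rw [pow_succ]
    calc y ^ (n - 1) * y * T ^ (n - 1) = y * (y ^ (n - 1) * T ^ (n - 1)) := by ring
    _ = y := by rw [hTpow, mul_one]
  have hterms : ∀ i ∈ Finset.range n,
      (p.coeff i • y ^ i) * T ^ (n - 1) = algebraMap A F (p.coeff i * t ^ (n - 1 - i)) := by
    intro i hi
    have hi' : i < n := Finset.mem_range.mp hi
    have hsplit : T ^ (n - 1) = T ^ i * T ^ (n - 1 - i) := by
      rw [← pow_add]; congr 1; omega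
    rw [Algebra.smul_def, map_mul, map_pow, ← hT, hsplit]
    calc algebraMap A F (p.coeff i) * y ^ i * (T ^ i * T ^ (n - 1 - i))
        = algebraMap A F (p.coeff i) * T ^ (n - 1 - i) * (y ^ i * T ^ i) := by ring
      _ = algebraMap A F (p.coeff i) * T ^ (n - 1 - i) := by rw [hTpow, mul_one]
  rw [Finset.sum_mul, Finset.sum_congr rfl hterms, ← map_sum, hlast] at h1
  exact ⟨-∑ i ∈ Finset.range n, p.coeff i * t ^ (n - 1 - i),
    by rw [map_neg]; linear_combination -h1⟩

lemma mem_condIdeal_singleton {A L : Type*} [CommRing A] [CommRing L] [Algebra A L]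
    {x : L} {r : A} :
    r ∈ condIdeal A L {x} ↔ ∃ r' : A, algebraMap A L r * x = algebraMap A L r' := by
  constructor
  · intro h; exact h x rfl
  · intro h u hu
    rw [Set.mem_singleton_iff] at hu
    subst hu
    exact h

theorem stmt8 (R : Type*) [CommRing R] [IsDomain R] (h1 : IsSQQR R)
    (h2 : ¬ IsIntegrallyClosed R) (x : FractionRing R)
    (hx : x ∈ integralClosure R (FractionRing R)) (hxR : x ∉ imageR R (FractionRing R)) :
    {P : Ideal R | P.IsPrime ∧ ¬ condIdeal R (FractionRing R) {x} ≤ P}.Infinite ∧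
      {P : Ideal R | P.IsPrime}.Infinite := by
  classical
  set I := condIdeal R (FractionRing R) {x} with hI
  have inj : Function.Injective (algebraMap R (FractionRing R)) :=
    IsFractionRing.injective R (FractionRing R)
  have hfirst : {P : Ideal R | P.IsPrime ∧ ¬ I ≤ P}.Infinite := by
    by_contra hfin
    rw [Set.not_infinite] at hfin
    obtain ⟨Ps, hprime, heq⟩ := h1 x
    have hsub : Ps ⊆ {P : Ideal R | P.IsPrime ∧ ¬ I ≤ P} := by
      intro P hP
      refine ⟨hprime P hP, ?_⟩
      have hxmem : x ∈ (↑(Algebra.adjoin R {x} : Subalgebra R (FractionRing R)) :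
          Set (FractionRing R)) := Algebra.subset_adjoin rfl
      rw [heq] at hxmem
      obtain ⟨s, hsP, r, hsr⟩ := Set.mem_iInter₂.mp hxmem P hP
      intro hle
      exact hsP (hle (mem_condIdeal_singleton.mpr ⟨r, by rw [mul_comm]; exact hsr⟩))
    have hPsfin : Ps.Finite := hfin.subset hsub
    obtain ⟨⟨a, b⟩, hab⟩ := IsLocalization.surj (nonZeroDivisors R) x
    have hbI : (b : R) ∈ I := mem_condIdeal_singleton.mpr ⟨a, by rw [mul_comm]; exact hab⟩
    have hb0 : (b : R) ≠ 0 := nonZeroDivisors.coe_ne_zero b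
    set s : Finset (Ideal R) := insert ⊥ hPsfin.toFinset with hs
    have havoid : ¬ ((I : Set R) ⊆ ⋃ P ∈ (↑s : Set (Ideal R)), (P : Set R)) := by
      rw [Ideal.subset_union_prime (⊥ : Ideal R) (⊥ : Ideal R)
        (fun P hP hne _ => by
          rw [hs, Finset.mem_insert] at hP
          rcases hP with rfl | hP
          · exact absurd rfl hne
          · exact hprime P (hPsfin.mem_toFinset.mp hP))]
      rintro ⟨P, hPs, hle⟩
      rw [hs, Finset.mem_insert] at hPs
      rcases hPs with rfl | hPs
      · exact hb0 (hle hbI)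
      · exact (hsub (hPsfin.mem_toFinset.mp hPs)).2 hle
    rw [Set.not_subset] at havoid
    obtain ⟨t, htI, htu⟩ := havoid
    have htP : ∀ P ∈ Ps, t ∉ P := by
      intro P hP hmem
      exact htu (Set.mem_biUnion (show P ∈ (↑s : Set (Ideal R)) by
        simp [hs, hPsfin.mem_toFinset, hP]) hmem)
    have ht0 : t ≠ 0 := by
      intro h
      exact htu (Set.mem_biUnion (show (⊥ : Ideal R) ∈ (↑s : Set (Ideal R)) by simp [hs])
        (by simp [h]))
    have hT0 : algebraMap R (FractionRing R) t ≠ 0 := fun h => ht0 (inj (by rw [h, map_zero]))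
    have hy : (algebraMap R (FractionRing R) t)⁻¹ ∈
        (↑(Algebra.adjoin R {x} : Subalgebra R (FractionRing R)) : Set (FractionRing R)) := by
      rw [heq]
      refine Set.mem_iInter₂.mpr fun P hP => ⟨t, htP P hP, 1, ?_⟩
      rw [inv_mul_cancel₀ hT0, map_one]
    have hxint : IsIntegral R x := hx
    have hyint : IsIntegral R ((algebraMap R (FractionRing R) t)⁻¹) :=
      IsIntegral.of_mem_of_fg _ hxint.fg_adjoin_singleton _ hy
    obtain ⟨u, hu⟩ := aux_inv_integral hyint (inv_mul_cancel₀ hT0)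
    obtain ⟨r', hr'⟩ := mem_condIdeal_singleton.mp htI
    refine hxR ⟨u * r', ?_⟩
    have hxeq : x = (algebraMap R (FractionRing R) t)⁻¹ *
        (algebraMap R (FractionRing R) t * x) := by
      rw [← mul_assoc, inv_mul_cancel₀ hT0, one_mul]
    rw [map_mul, ← hu, ← hr']
    exact hxeq.symm
  exact ⟨hfirst, hfirst.mono fun P hP => hP.1⟩


end
end

section
/- Let R be a one-dimensional integral domain in which every nonzero element lies in only finitely many prime ideals. Then R is an sQQR-domain if and only if R is a Prüfer domain. -/
noncomputable section

/-!
If `u, u⁻¹ ∉ R_M`, no localization at `M` occurs in the representations of `R[u]` and `R[u⁻¹]`.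
Dimension one and finite character give `c ∉ M` and `0 ≠ q ∈ M` with `c / q ∈ R_P` for every
prime `P ≠ M`, hence `c / q ∈ R[u] ∩ R[u⁻¹]`. That intersection is integral over `R`, and lying
over then forces `c ∈ M`, a contradiction; so every `R_M` is a valuation ring.

Conversely, over a Prüfer domain every overring `T` is the intersection of the `R_P` containing
it, since `R_{Q ∩ R} ⊇ T` for each maximal ideal `Q` of `T`.
-/

open Polynomial

section LocSet

variable {R L : Type*} [CommRing R] [CommRing L] [Algebra R L]

lemma mul_algebraMap_mem_locSet {P : Ideal R} {x : L} (hx : x ∈ locSet R L P) (r : R) :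
    x * algebraMap R L r ∈ locSet R L P := by
  obtain ⟨s, hs, t, h⟩ := hx
  exact ⟨s, hs, t * r, by rw [mul_right_comm, h, map_mul]⟩

end LocSet

section MinimalPrimes

variable {R : Type*} [CommRing R]

/-- A prime containing `I` and avoiding the multiplicative set generated by `z` and `R \ P` would
lie inside `P` without containing `z`, contradicting minimality. -/
theorem Ideal.exists_pow_mul_mem_of_mem_minimalPrimes {I P : Ideal R} (hP : P ∈ I.minimalPrimes)
    {z : R} (hz : z ∈ P) : ∃ k : ℕ, ∃ s ∉ P, z ^ k * s ∈ I := by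
  have := hP.1.1
  by_contra! h
  let S := Submonoid.powers z ⊔ P.primeCompl
  have hdisj : Disjoint (I : Set R) S := by
    refine Set.disjoint_right.mpr fun x hx hxI => ?_
    obtain ⟨_, ⟨k, rfl⟩, s, hs, rfl⟩ := Submonoid.mem_sup.mp hx
    exact h k s hs hxI
  obtain ⟨Q, hQ, hIQ, hQS⟩ := Ideal.exists_le_prime_disjoint I S hdisj
  have hQP : Q ≤ P := fun x hxQ => by
    by_contra hxP
    exact Set.disjoint_left.mp hQS hxQ (Submonoid.mem_sup_right (show x ∈ P.primeCompl from hxP))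
  exact Set.disjoint_left.mp hQS (hP.2 ⟨hQ, hIQ⟩ hQP hz :)
    (Submonoid.mem_sup_left (Submonoid.mem_powers z))

end MinimalPrimes

section DimensionOne

variable {R : Type*} [CommRing R] [IsDomain R] [Ring.KrullDimLE 1 R]

theorem mem_minimalPrimes_span_singleton {P : Ideal R} [P.IsPrime] {q : R} (hq : q ≠ 0)
    (hqP : q ∈ P) : P ∈ (Ideal.span {q}).minimalPrimes := by
  refine ⟨⟨inferInstance, (Ideal.span_singleton_le_iff_mem P).mpr hqP⟩, fun Q ⟨hQ, hqQ⟩ hQP => ?_⟩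
  have hQ0 : Q ≠ ⊥ := fun h => hq (by simpa [h] using hqQ (Ideal.mem_span_singleton_self q))
  exact ((hQ.isMaximal_of_ne_bot hQ0).eq_of_le Ideal.IsPrime.ne_top' hQP).ge

theorem exists_notMem_mul_eq_of_ne {P M : Ideal R} [P.IsPrime] [M.IsPrime] (hPM : P ≠ M)
    {q : R} (hq : q ≠ 0) (hqP : q ∈ P) : ∃ w ∉ M, ∃ s ∉ P, ∃ t, w * s = q * t := by
  have hP0 : P ≠ ⊥ := fun h => hq (by simpa [h] using hqP)
  obtain ⟨z, hzP, hzM⟩ := SetLike.not_le_iff_exists.mp fun hle =>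
    hPM (((Ideal.IsPrime.isMaximal_of_ne_bot inferInstance hP0).eq_of_le
      Ideal.IsPrime.ne_top' hle))
  obtain ⟨k, s, hs, hks⟩ :=
    Ideal.exists_pow_mul_mem_of_mem_minimalPrimes (mem_minimalPrimes_span_singleton hq hqP) hzP
  obtain ⟨t, ht⟩ := Ideal.mem_span_singleton'.mp hks
  exact ⟨z ^ k, fun h => hzM (Ideal.IsPrime.mem_of_pow_mem inferInstance k h), s, hs, t,
    by rw [← ht, mul_comm]⟩

end DimensionOne

section FractionField

variable {R K : Type*} [CommRing R] [Field K] [Algebra R K] [IsFractionRing R K]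

lemma div_mem_locSet_of_mul_eq {P : Ideal R} {q s w t : R} (hq : q ≠ 0) (hs : s ∉ P)
    (h : w * s = q * t) : algebraMap R K w / algebraMap R K q ∈ locSet R K P := by
  refine ⟨s, hs, t, ?_⟩
  rw [div_mul_eq_mul_div, div_eq_iff ((map_ne_zero_iff _ (IsFractionRing.injective R K)).mpr hq),
    ← map_mul, ← map_mul, h, mul_comm]

lemma ne_bot_of_notMem_locSet [Nontrivial R] {M : Ideal R} {u : K} (hu : u ∉ locSet R K M) :
    M ≠ ⊥ := by
  rintro rfl
  obtain ⟨x, y, hy, rfl⟩ := IsFractionRing.div_surjective R u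
  have hy0 : algebraMap R K y ≠ 0 := IsFractionRing.to_map_ne_zero_of_mem_nonZeroDivisors hy
  exact hu ⟨y, fun h => hy0 (by rw [Ideal.mem_bot.mp h, map_zero]), x, div_mul_cancel₀ _ hy0⟩

/-- `c` is the product of the witnesses of `exists_notMem_mul_eq_of_ne` over the finitely many
primes `P ≠ M` containing `q`. -/
theorem exists_notMem_forall_div_mem_locSet [IsDomain R] [Ring.KrullDimLE 1 R]
    (hfin : ∀ a : R, a ≠ 0 → {P : Ideal R | P.IsPrime ∧ a ∈ P}.Finite)
    (M : Ideal R) [M.IsPrime] {q : R} (hq : q ≠ 0) :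
    ∃ c ∉ M, ∀ P : Ideal R, P.IsPrime → P ≠ M →
      algebraMap R K c / algebraMap R K q ∈ locSet R K P := by
  classical
  let F := ((hfin q hq).subset fun P (hP : P.IsPrime ∧ q ∈ P ∧ P ≠ M) => ⟨hP.1, hP.2.1⟩).toFinset
  have hF : ∀ P, P ∈ F ↔ P.IsPrime ∧ q ∈ P ∧ P ≠ M := fun P => Set.Finite.mem_toFinset _
  have hloc : ∀ P ∈ F, ∃ w ∉ M, ∃ s ∉ P, ∃ t, w * s = q * t := fun P hP => by
    obtain ⟨hPp, hqP, hPM⟩ := (hF P).mp hP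
    exact exists_notMem_mul_eq_of_ne hPM hq hqP
  choose! w hwM s hs t hst using hloc
  refine ⟨∏ P ∈ F, w P, fun h => Submonoid.prod_mem M.primeCompl hwM h, fun P hP hPM => ?_⟩
  by_cases hqP : q ∈ P
  · have hPF : P ∈ F := (hF P).mpr ⟨hP, hqP, hPM⟩
    rw [← Finset.mul_prod_erase F w hPF, map_mul, mul_div_right_comm]
    exact mul_algebraMap_mem_locSet (div_mem_locSet_of_mul_eq hq (hs P hPF) (hst P hPF)) _
  · exact div_mem_locSet_of_mul_eq hq hqP (mul_comm _ _)

end FractionField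

section Integrality

variable {R K : Type*} [CommRing R] [Field K] [Algebra R K]

lemma aeval_zpow_mul_zpow_mem_span {u : K} (hu : u ≠ 0) (ε : ℤ) (p : R[X]) {S : Set ℤ} {i : ℤ}
    (h : ∀ j ≤ p.natDegree, i + ε * j ∈ S) :
    aeval (u ^ ε) p * u ^ i ∈ Submodule.span R ((u ^ ·) '' S) := by
  rw [aeval_eq_sum_range, Finset.sum_mul]
  refine Submodule.sum_mem _ fun j hj => ?_
  rw [smul_mul_assoc, ← zpow_natCast, ← zpow_mul, ← zpow_add₀ hu, add_comm]
  exact Submodule.smul_mem _ _ (Submodule.subset_span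
    ⟨_, h j (Nat.lt_succ_iff.mp (Finset.mem_range.mp hj)), rfl⟩)

/-- If `v = p(u) = p'(u⁻¹)`, then `v` stabilises the finitely generated module spanned by
`u ^ i` for `-deg p' ≤ i ≤ deg p`. -/
theorem isIntegral_of_mem_adjoin_of_mem_adjoin_inv {u v : K} (h : v ∈ Algebra.adjoin R {u})
    (h' : v ∈ Algebra.adjoin R {u⁻¹}) : IsIntegral R v := by
  rcases eq_or_ne u 0 with rfl | hu
  · obtain ⟨r, rfl⟩ :=
      Algebra.mem_bot.mp (Algebra.adjoin_le (Set.singleton_subset_iff.mpr (zero_mem ⊥)) h)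
    exact isIntegral_algebraMap
  rw [Algebra.adjoin_singleton_eq_range_aeval, AlgHom.mem_range] at h h'
  obtain ⟨p, rfl⟩ := h
  obtain ⟨p', hp'⟩ := h'
  let N := Submodule.span R ((u ^ ·) '' Set.Icc (-(p'.natDegree : ℤ)) p.natDegree)
  have hN : ∀ i ∈ Set.Icc (-(p'.natDegree : ℤ)) p.natDegree, u ^ i ∈ N :=
    fun i hi => Submodule.subset_span ⟨i, hi, rfl⟩
  refine isIntegral_of_smul_mem_submodule N ?_ (Submodule.fg_span ((Set.finite_Icc _ _).image _))
    _ fun n hn => ?_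
  · exact (Submodule.ne_bot_iff N).mpr ⟨_, hN 0 (by simp), by simp⟩
  refine (Submodule.span_le (p := N.comap (LinearMap.mulLeft R (aeval u p)))).mpr ?_ hn
  rintro _ ⟨i, ⟨hi₁, hi₂⟩, rfl⟩
  rcases lt_or_ge i 0 with hi | hi
  · simpa using aeval_zpow_mul_zpow_mem_span (S := Set.Icc _ _) hu 1 p
      fun j hj => ⟨by omega, by omega⟩
  · rw [SetLike.mem_coe, Submodule.mem_comap, LinearMap.mulLeft_apply]
    rw [← hp']
    simpa using aeval_zpow_mul_zpow_mem_span (S := Set.Icc _ _) hu (-1) p'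
      fun j hj => ⟨by omega, by omega⟩

/-- Lying over in the integral extension `R ⊆ integralClosure R S`. -/
theorem mem_of_isIntegral_of_algebraMap_eq_mul {S : Type*} [CommRing S] [Algebra R S]
    (hinj : Function.Injective (algebraMap R S)) {M : Ideal R} [M.IsPrime] {v : S}
    (hv : IsIntegral R v) {c q : R} (hq : q ∈ M) (h : algebraMap R S c = v * algebraMap R S q) :
    c ∈ M := by
  let A := integralClosure R S
  have hinjA : Function.Injective (algebraMap R A) := fun a b hab => hinj congr(($hab : S))
  obtain ⟨Q, -, -, hQM⟩ := Ideal.exists_ideal_over_prime_of_isIntegral M ⊥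
    (Ideal.comap_bot_le_of_injective (algebraMap R A) hinjA)
  have hc : algebraMap R A c = ⟨v, hv⟩ * algebraMap R A q := Subtype.ext h
  rw [← hQM, Ideal.mem_comap, hc]
  exact Q.mul_mem_left _ (Ideal.mem_comap.mp (hQM ▸ hq))

end Integrality

section Prufer

variable {R : Type*} [CommRing R] [IsDomain R]

theorem isInteger_atPrime_iff_mem_locSet (P : Ideal R) [P.IsPrime] (u : FractionRing R) :
    IsLocalization.IsInteger (Localization.AtPrime P) u ↔ u ∈ locSet R (FractionRing R) P := by
  constructor
  · rintro ⟨a, rfl⟩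
    obtain ⟨⟨r, s⟩, rfl⟩ := IsLocalization.mk'_surjective P.primeCompl a
    refine ⟨s, s.2, r, ?_⟩
    rw [IsScalarTower.algebraMap_apply R (Localization.AtPrime P) (FractionRing R) s,
      IsScalarTower.algebraMap_apply R (Localization.AtPrime P) (FractionRing R) r, ← map_mul,
      IsLocalization.mk'_spec]
  · rintro ⟨s, hs, r, h⟩
    have hs0 : algebraMap R (FractionRing R) s ≠ 0 :=
      (map_ne_zero_iff _ (IsFractionRing.injective R _)).mpr fun h0 => hs (h0 ▸ P.zero_mem)
    refine ⟨IsLocalization.mk' _ r (⟨s, hs⟩ : P.primeCompl), mul_right_cancel₀ hs0 ?_⟩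
    rw [h, IsScalarTower.algebraMap_apply R (Localization.AtPrime P) (FractionRing R) s, ← map_mul,
      IsLocalization.mk'_spec, ← IsScalarTower.algebraMap_apply]

theorem isPrufer_iff : IsPrufer R ↔ ∀ P : Ideal R, P.IsPrime →
    ∀ u : FractionRing R, u ∈ locSet R _ P ∨ u⁻¹ ∈ locSet R _ P :=
  forall₂_congr fun P _ => by
    simp_rw [ValuationRing.iff_isInteger_or_isInteger _ (FractionRing R),
      isInteger_atPrime_iff_mem_locSet]

theorem IsSQQR.mem_adjoin_of_forall_ne (hsq : IsSQQR R) {M : Ideal R} {u v : FractionRing R}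
    (hu : u ∉ locSet R _ M) (hv : ∀ P : Ideal R, P.IsPrime → P ≠ M → v ∈ locSet R _ P) :
    v ∈ Algebra.adjoin R {u} := by
  obtain ⟨Ps, hPs, hT⟩ := hsq u
  have huT : u ∈ ⋂ P ∈ Ps, locSet R _ P := hT ▸ Algebra.subset_adjoin rfl
  rw [← SetLike.mem_coe, hT]
  exact Set.mem_iInter₂.mpr fun P hP =>
    hv P (hPs P hP) (by rintro rfl; exact hu (Set.mem_iInter₂.mp huT P hP))

theorem IsSQQR.mem_locSet_or_inv_mem_locSet (hsq : IsSQQR R) [Ring.KrullDimLE 1 R]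
    (hfin : ∀ a : R, a ≠ 0 → {P : Ideal R | P.IsPrime ∧ a ∈ P}.Finite) (M : Ideal R) [M.IsPrime]
    (u : FractionRing R) : u ∈ locSet R _ M ∨ u⁻¹ ∈ locSet R _ M := by
  by_contra! ⟨hu, hu'⟩
  obtain ⟨q, hqM, hq⟩ := Submodule.exists_mem_ne_zero_of_ne_bot (ne_bot_of_notMem_locSet hu)
  obtain ⟨c, hcM, hc⟩ := exists_notMem_forall_div_mem_locSet (K := FractionRing R) hfin M hq
  have hv := isIntegral_of_mem_adjoin_of_mem_adjoin_inv (hsq.mem_adjoin_of_forall_ne hu hc)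
    (hsq.mem_adjoin_of_forall_ne hu' hc)
  exact hcM (mem_of_isIntegral_of_algebraMap_eq_mul (IsFractionRing.injective R _) hv hqM
    (div_mul_cancel₀ _ ((map_ne_zero_iff _ (IsFractionRing.injective R _)).mpr hq)).symm)

theorem IsSQQR.isPrufer (hsq : IsSQQR R) [Ring.KrullDimLE 1 R]
    (hfin : ∀ a : R, a ≠ 0 → {P : Ideal R | P.IsPrime ∧ a ∈ P}.Finite) : IsPrufer R :=
  isPrufer_iff.mpr fun M _ => hsq.mem_locSet_or_inv_mem_locSet hfin M

/-- If `t ∈ T` had `t⁻¹ = r / s` with `r ∈ P` and `s ∉ P`, then `s = t r` would lie in `Q`. -/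
theorem IsPrufer.coe_subset_locSet_comap (hR : IsPrufer R) (T : Subalgebra R (FractionRing R))
    (Q : Ideal T) [Q.IsPrime] :
    (T : Set (FractionRing R)) ⊆ locSet R _ (Q.comap (algebraMap R T)) := by
  intro t ht
  rcases eq_or_ne t 0 with rfl | ht0
  · exact ⟨1, (Ideal.ne_top_iff_one _).mp Ideal.IsPrime.ne_top', 0, by simp⟩
  rcases isPrufer_iff.mp hR (Q.comap (algebraMap R T)) inferInstance t with h | ⟨s, hs, r, h⟩
  · exact h
  have hts : t * algebraMap R _ r = algebraMap R _ s := by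
    rw [← h, ← mul_assoc, mul_inv_cancel₀ ht0, one_mul]
  by_cases hr : r ∈ Q.comap (algebraMap R T)
  · refine absurd ?_ hs
    have : (⟨t, ht⟩ : T) * algebraMap R T r = algebraMap R T s := Subtype.ext hts
    rw [Ideal.mem_comap, ← this]
    exact Q.mul_mem_left _ hr
  · exact ⟨r, hr, s, hts⟩

/-- The colon ideal `(T :_T w)` of `w` lies in no maximal ideal `Q` of `T`, because
`w ∈ R_P ⊇ T` for `P = Q ∩ R`. -/
theorem IsPrufer.coe_eq_iInter_locSet (hR : IsPrufer R) (T : Subalgebra R (FractionRing R)) :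
    (T : Set (FractionRing R)) = ⋂ P ∈ {P : Ideal R | P.IsPrime ∧
      (T : Set (FractionRing R)) ⊆ locSet R _ P}, locSet R _ P := by
  refine subset_antisymm (fun t ht => Set.mem_iInter₂.mpr fun P hP => hP.2 ht) fun w hw => ?_
  let J : Ideal T := (1 : Submodule T (FractionRing R)).colon {w}
  by_cases hJ : J = ⊤
  · obtain ⟨y, hy⟩ := Submodule.mem_one.mp
      (Submodule.mem_colon_singleton.mp (hJ ▸ Submodule.mem_top : (1 : T) ∈ J))
    rw [one_smul] at hy
    exact hy ▸ y.2
  obtain ⟨Q, hQ, hJQ⟩ := Ideal.exists_le_maximal J hJ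
  obtain ⟨s, hs, r, h⟩ := Set.mem_iInter₂.mp hw _ ⟨Ideal.IsPrime.comap _,
    hR.coe_subset_locSet_comap T Q⟩
  refine absurd (hJQ (Submodule.mem_colon_singleton.mpr (Submodule.mem_one.mpr ?_))) hs
  exact ⟨algebraMap R T r, by rw [Algebra.smul_def, mul_comm]; exact h.symm⟩

theorem IsPrufer.isSQQR (hR : IsPrufer R) : IsSQQR R :=
  fun u => ⟨_, fun _ hP => hP.1, hR.coe_eq_iInter_locSet (Algebra.adjoin R {u})⟩

end Prufer

theorem stmt17 (R : Type*) [CommRing R] [IsDomain R]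
    (hdim : ringKrullDim R = 1)
    (hfin : ∀ a : R, a ≠ 0 → {P : Ideal R | P.IsPrime ∧ a ∈ P}.Finite) :
    IsSQQR R ↔ IsPrufer R := by
  have : Ring.KrullDimLE 1 R := Ring.krullDimLE_iff.mpr hdim.le
  exact ⟨fun hsq => hsq.isPrufer hfin, IsPrufer.isSQQR⟩
end
end
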